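/- Let (A, M, {R_α}_{α∈Ω}) be a relative Rota-Baxter family algebra. Define, for each n ≥ 1, the map d_R : Hom_Ω(M^{⊗n}, A) → Hom_Ω(M^{⊗(n+1)}, A) by (d_R f)_{α₁,…,α_{n+1}}(u₁,…,u_{n+1}) = R_{α₁}(u₁)·f_{α₂,…,α_{n+1}}(u₂,…,u_{n+1}) − R_{α₁⋯α_{n+1}}( u₁·f_{α₂,…,α_{n+1}}(u₂,…,u_{n+1}) ) + Σ_{i=1}^{n} (−1)^{i} f_{α₁,…,α_iα_{i+1},…,α_{n+1}}(u₁,…,u_{i−1}, R_{α_i}(u_i)·u_{i+1} + u_i·R_{α_{i+1}}(u_{i+1}), u_{i+2},…,u_{n+1}) + (−1)^{n+1} f_{α₁,…,αₙ}(u₁,…,uₙ)·R_{α_{n+1}}(u_{n+1}) − (−1)^{n+1} R_{α₁⋯α_{n+1}}( f_{α₁,…,αₙ}(u₁,…,uₙ)·u_{n+1} ). Then d_R ∘ d_R = 0, i.e., d_R(d_R f) = 0 for every f ∈ Hom_Ω(M^{⊗n}, A) and every n ≥ 1. -/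
import Mathlib


variable {k : Type*} [Field k] [CharZero k]
variable {Ω : Type*} [Semigroup Ω]
variable {A : Type*} [NonUnitalRing A] [Module k A] [SMulCommClass k A A] [IsScalarTower k A A]
variable {M : Type*} [AddCommGroup M] [Module k M]

/-- Replace the block of `n` consecutive entries of `v` starting at position `i`
(0-indexed) by the single entry `x`. -/
def collapseAt {X : Type*} (v : ℕ → X) (i n : ℕ) (x : X) : ℕ → X :=
  fun j => if j < i then v j else if j = i then x else v (j + n - 1)

/-- `prodSeg α i n = α i * α (i+1) * ⋯ * α (i+n)`, the product of `n+1`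
consecutive labels in the semigroup `Ω`. -/
def prodSeg {Ω : Type*} [Mul Ω] (α : ℕ → Ω) : ℕ → ℕ → Ω
  | i, 0 => α i
  | i, n + 1 => α i * prodSeg α (i + 1) n

/-- `f` is (an encoding of) a collection, indexed by `Ω^n`, of `n`-multilinear
maps `V^{⊗ n} → W`: it depends only on the first `n` labels and the first `n`
arguments, and it is `k`-linear in each of the first `n` argument slots. -/
def IsFamMulti (k : Type*) [Field k] {Ω V W : Type*}
    [AddCommGroup V] [Module k V] [AddCommGroup W] [Module k W]
    (n : ℕ) (f : (ℕ → Ω) → (ℕ → V) → W) : Prop :=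
  (∀ (α α' : ℕ → Ω) (v v' : ℕ → V),
      (∀ t, t < n → α t = α' t) → (∀ t, t < n → v t = v' t) → f α v = f α' v') ∧
  (∀ (α : ℕ → Ω) (v : ℕ → V) (t : ℕ), t < n → ∀ x y : V,
      f α (Function.update v t (x + y))
        = f α (Function.update v t x) + f α (Function.update v t y)) ∧
  (∀ (α : ℕ → Ω) (v : ℕ → V) (t : ℕ), t < n → ∀ (c : k) (x : V),
      f α (Function.update v t (c • x)) = c • f α (Function.update v t x))

/-- The derived bracket `⟦f, g⟧` of collections `f ∈ Hom_Ω(M^{⊗m}, A)` and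
`g ∈ Hom_Ω(M^{⊗n}, A)` (0-indexed sums, so `(-1)^{(i-1)n}` becomes `(-1)^{in}`
and `(-1)^{in}` becomes `(-1)^{(i+1)n}`).  Here `lact` and `ract` are the left
and right actions of `A` on `M`. -/
noncomputable def derBracket
    (lact : A →ₗ[k] M →ₗ[k] M) (ract : M →ₗ[k] A →ₗ[k] M)
    (m n : ℕ) (f g : (ℕ → Ω) → (ℕ → M) → A) : (ℕ → Ω) → (ℕ → M) → A :=
  fun α u =>
    (∑ i ∈ Finset.range m, ((-1 : ℤ) ^ (i * n)) •
        f (collapseAt α i (n + 1) (prodSeg α i n))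
          (collapseAt u i (n + 1)
            (lact (g (fun t => α (i + t)) (fun t => u (i + t))) (u (i + n)))))
    - (∑ i ∈ Finset.range m, ((-1 : ℤ) ^ ((i + 1) * n)) •
        f (collapseAt α i (n + 1) (prodSeg α i n))
          (collapseAt u i (n + 1)
            (ract (u i) (g (fun t => α (i + 1 + t)) (fun t => u (i + 1 + t))))))
    - ((-1 : ℤ) ^ (m * n)) •
        ((∑ i ∈ Finset.range n, ((-1 : ℤ) ^ (i * m)) •
            g (collapseAt α i (m + 1) (prodSeg α i m))
              (collapseAt u i (m + 1)
                (lact (f (fun t => α (i + t)) (fun t => u (i + t))) (u (i + m)))))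
         - (∑ i ∈ Finset.range n, ((-1 : ℤ) ^ ((i + 1) * m)) •
            g (collapseAt α i (m + 1) (prodSeg α i m))
              (collapseAt u i (m + 1)
                (ract (u i) (f (fun t => α (i + 1 + t)) (fun t => u (i + 1 + t)))))))
    + ((-1 : ℤ) ^ (m * n)) •
        (f α u * g (fun t => α (m + t)) (fun t => u (m + t))
         - ((-1 : ℤ) ^ (m * n)) • (g α u * f (fun t => α (n + t)) (fun t => u (n + t))))

/-- The differential `d_R` induced on `Hom_Ω(M^{⊗n}, A)` by a family
`R = {R_α : M → A}` of operators (0-indexed: the 1-indexed sum index `i` with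
sign `(-1)^i` becomes the 0-indexed `i` with sign `(-1)^{i+1}`). -/
noncomputable def dFam
    (lact : A →ₗ[k] M →ₗ[k] M) (ract : M →ₗ[k] A →ₗ[k] M)
    (R : Ω → M →ₗ[k] A) (n : ℕ) (f : (ℕ → Ω) → (ℕ → M) → A) :
    (ℕ → Ω) → (ℕ → M) → A :=
  fun α u =>
    R (α 0) (u 0) * f (fun t => α (1 + t)) (fun t => u (1 + t))
    - R (prodSeg α 0 n) (ract (u 0) (f (fun t => α (1 + t)) (fun t => u (1 + t))))
    + ∑ i ∈ Finset.range n, ((-1 : ℤ) ^ (i + 1)) •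
        f (collapseAt α i 2 (α i * α (i + 1)))
          (collapseAt u i 2
            (lact (R (α i) (u i)) (u (i + 1)) + ract (u i) (R (α (i + 1)) (u (i + 1)))))
    + ((-1 : ℤ) ^ (n + 1)) • (f α u * R (α n) (u n))
    - ((-1 : ℤ) ^ (n + 1)) • R (prodSeg α 0 n) (lact (f α u) (u n))

section DFamSqAux

namespace DFamSq

/-! ### collapseAt evaluation and composition lemmas -/

lemma cA_lt {X : Type*} (v : ℕ → X) {i j : ℕ} (n : ℕ) (x : X) (h : j < i) :
    collapseAt v i n x j = v j := by simp [collapseAt, h]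

lemma cA_self {X : Type*} (v : ℕ → X) (i n : ℕ) (x : X) :
    collapseAt v i n x i = x := by simp [collapseAt]

lemma cA_gt {X : Type*} (v : ℕ → X) {i j : ℕ} (n : ℕ) (x : X) (h : i < j) :
    collapseAt v i n x j = v (j + n - 1) := by
  have h1 : ¬ j < i := by omega
  have h2 : j ≠ i := by omega
  simp [collapseAt, h1, h2]

lemma shift_collapse {X : Type*} (v : ℕ → X) (p : ℕ) (x : X) :
    (fun t => collapseAt v (p + 1) 2 x (1 + t)) = collapseAt (fun t => v (1 + t)) p 2 x := by
  funext t
  simp only [collapseAt]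
  split_ifs <;> first | rfl | (exfalso; omega) | (congr 1; omega)

lemma shift_collapse_zero {X : Type*} (v : ℕ → X) (x : X) :
    (fun t => collapseAt v 0 2 x (1 + t)) = (fun t => v (1 + (1 + t))) := by
  funext t
  simp only [collapseAt]
  split_ifs <;> first | rfl | (exfalso; omega) | (congr 1; omega)

lemma collapse_collapse {X : Type*} (v : ℕ → X) {p q : ℕ} (hpq : p < q) (x y : X) :
    collapseAt (collapseAt v (q + 1) 2 y) p 2 x = collapseAt (collapseAt v p 2 x) q 2 y := by
  funext m
  simp only [collapseAt]
  split_ifs <;> first | rfl | (exfalso; omega) | (congr 1; omega)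

lemma collapse_collapse_adj {X : Type*} (v : ℕ → X) (p : ℕ) (x y w : X) :
    collapseAt (collapseAt v (p + 1) 2 y) p 2 w = collapseAt (collapseAt v p 2 x) p 2 w := by
  funext m
  simp only [collapseAt]
  split_ifs <;> first | rfl | (exfalso; omega) | (congr 1; omega)

/-! ### prodSeg lemmas -/

lemma prodSeg_shift {G : Type*} [Mul G] (α : ℕ → G) (s : ℕ) :
    ∀ (m i : ℕ), prodSeg (fun t => α (s + t)) i m = prodSeg α (s + i) m
  | 0, _ => rfl
  | m + 1, i => by
      show α (s + i) * prodSeg (fun t => α (s + t)) (i + 1) m = _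
      rw [prodSeg_shift α s m (i + 1)]
      show _ = α (s + i) * prodSeg α (s + i + 1) m
      rw [show s + (i + 1) = s + i + 1 by omega]

lemma prodSeg_congr {G : Type*} [Mul G] :
    ∀ (m i : ℕ) (α β : ℕ → G), (∀ t, i ≤ t → t ≤ i + m → α t = β t) →
      prodSeg α i m = prodSeg β i m
  | 0, i, α, β, h => h i le_rfl (by omega)
  | m + 1, i, α, β, h => by
      show α i * prodSeg α (i + 1) m = β i * prodSeg β (i + 1) m
      rw [h i le_rfl (by omega),
        prodSeg_congr m (i + 1) α β (fun t h1 h2 => h t (by omega) (by omega))]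

lemma prodSeg_succ_right {G : Type*} [Semigroup G] (α : ℕ → G) :
    ∀ (m i : ℕ), prodSeg α i (m + 1) = prodSeg α i m * α (i + m + 1)
  | 0, _ => rfl
  | m + 1, i => by
      show α i * prodSeg α (i + 1) (m + 1) = (α i * prodSeg α (i + 1) m) * α (i + (m + 1) + 1)
      rw [prodSeg_succ_right α m (i + 1), ← mul_assoc,
        show i + 1 + m + 1 = i + (m + 1) + 1 by omega]

lemma prodSeg_collapse {G : Type*} [Semigroup G] :
    ∀ (p : ℕ) (α : ℕ → G) (m : ℕ), p ≤ m →
      prodSeg (collapseAt α p 2 (α p * α (p + 1))) 0 m = prodSeg α 0 (m + 1)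
  | 0, α, 0, _ => cA_self α 0 2 _
  | 0, α, m + 1, _ => by
      show collapseAt α 0 2 (α 0 * α 1) 0 *
          prodSeg (collapseAt α 0 2 (α 0 * α 1)) 1 m = α 0 * prodSeg α 1 (m + 1)
      rw [cA_self]
      rw [show prodSeg (collapseAt α 0 2 (α 0 * α 1)) 1 m
            = prodSeg (fun t => collapseAt α 0 2 (α 0 * α 1) (1 + t)) 0 m by
          rw [prodSeg_shift]]
      rw [shift_collapse_zero]
      rw [show prodSeg (fun t => α (1 + (1 + t))) 0 m = prodSeg (fun t => α (2 + t)) 0 m from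
          prodSeg_congr m 0 _ _ (fun t _ _ => by congr 1; omega)]
      rw [prodSeg_shift α 2 m 0]
      show α 0 * α 1 * prodSeg α 2 m = α 0 * (α 1 * prodSeg α (1 + 1) m)
      rw [mul_assoc]
  | p + 1, α, m + 1, hpm => by
      show collapseAt α (p + 1) 2 (α (p + 1) * α (p + 1 + 1)) 0 *
          prodSeg (collapseAt α (p + 1) 2 (α (p + 1) * α (p + 1 + 1))) 1 m
        = α 0 * prodSeg α 1 (m + 1)
      rw [cA_lt _ _ _ (by omega)]
      congr 1
      rw [show prodSeg (collapseAt α (p + 1) 2 (α (p + 1) * α (p + 1 + 1))) 1 m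
            = prodSeg (fun t => collapseAt α (p + 1) 2 (α (p + 1) * α (p + 1 + 1)) (1 + t)) 0 m by
          rw [prodSeg_shift]]
      rw [shift_collapse]
      have hv : α (p + 1) * α (p + 1 + 1)
          = (fun t => α (1 + t)) p * (fun t => α (1 + t)) (p + 1) := by
        show α (p + 1) * α (p + 1 + 1) = α (1 + p) * α (1 + (p + 1))
        rw [show 1 + p = p + 1 by omega, show 1 + (p + 1) = p + 1 + 1 by omega]
      rw [hv, prodSeg_collapse p (fun t => α (1 + t)) m (by omega), prodSeg_shift α 1 (m + 1) 0]

end DFamSq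

end DFamSqAux


namespace DFamSq

section Ops

variable (lact : A →ₗ[k] M →ₗ[k] M) (ract : M →ₗ[k] A →ₗ[k] M) (R : Ω → M →ₗ[k] A)

/-- The left action of labelled module elements on `A`. -/
def Lop (a ω : Ω) (u : M) : A →+ A :=
  AddMonoidHom.mk' (fun x => R a u * x - R ω (ract u x)) (by
    intro x y
    simp only [mul_add, map_add]
    abel)

/-- The right action of labelled module elements on `A`. -/
def Rop (c ω : Ω) (w : M) : A →+ A :=
  AddMonoidHom.mk' (fun x => x * R c w - R ω (lact x w)) (by
    intro x y
    simp only [add_mul, map_add, LinearMap.add_apply]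
    abel)

/-- The (labelled) product on `M` induced by the family `R`. -/
def starM (a b : Ω) (u v : M) : M := lact (R a u) v + ract u (R b v)

@[simp] lemma Lop_apply (a ω : Ω) (u : M) (x : A) :
    Lop ract R a ω u x = R a u * x - R ω (ract u x) := rfl

@[simp] lemma Rop_apply (c ω : Ω) (w : M) (x : A) :
    Rop lact R c ω w x = x * R c w - R ω (lact x w) := rfl

end Ops

section OpsLemmas

variable {lact : A →ₗ[k] M →ₗ[k] M} {ract : M →ₗ[k] A →ₗ[k] M} {R : Ω → M →ₗ[k] A}
variable (hlact : ∀ (a b : A) (u : M), lact (a * b) u = lact a (lact b u))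
variable (hmid : ∀ (a : A) (u : M) (b : A), ract (lact a u) b = lact a (ract u b))
variable (hract : ∀ (u : M) (a b : A), ract (ract u a) b = ract u (a * b))
variable (hRB : ∀ (α β : Ω) (u v : M),
      R α u * R β v = R (α * β) (lact (R α u) v + ract u (R β v)))

include hmid hract hRB in
lemma LL (a b ω' : Ω) (u v : M) (x : A) :
    Lop ract R a (a * ω') u (Lop ract R b ω' v x)
      = Lop ract R (a * b) (a * ω') (starM lact ract R a b u v) x := by
  simp only [Lop_apply, starM, mul_sub, map_sub]
  rw [← mul_assoc, hRB a b u v, hRB a ω' u (ract v x), ← hmid, ← hract]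
  simp only [map_add, LinearMap.add_apply]
  abel

include hlact hmid hRB in
lemma RR (b c ω'' : Ω) (v w : M) (x : A) :
    Rop lact R c (ω'' * c) w (Rop lact R b ω'' v x)
      = Rop lact R (b * c) (ω'' * c) (starM lact ract R b c v w) x := by
  simp only [Rop_apply, starM, sub_mul, map_sub]
  rw [mul_assoc, hRB b c v w, hRB ω'' c (lact x v) w, hlact]
  simp only [map_add, LinearMap.add_apply, hmid]
  abel

include hlact hmid hract hRB in
lemma LR (a c ω' ω'' : Ω) (hω : a * ω' = ω'' * c) (u w : M) (x : A) :
    Lop ract R a (a * ω') u (Rop lact R c ω' w x)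
      = Rop lact R c (a * ω') w (Lop ract R a ω'' u x) := by
  simp only [Lop_apply, Rop_apply, mul_sub, sub_mul, map_sub]
  rw [hRB a ω' u (lact x w), ← hlact, ← hract]
  rw [show R ω'' (ract u x) * R c w = R (ω'' * c) (lact (R ω'' (ract u x)) w
        + ract (ract u x) (R c w)) from hRB ω'' c (ract u x) w, ← hω]
  simp only [map_add, LinearMap.add_apply]
  rw [← mul_assoc]
  abel

include hlact hmid hract hRB in
lemma star_assoc (a b c : Ω) (u v w : M) :
    starM lact ract R (a * b) c (starM lact ract R a b u v) w
      = starM lact ract R a (b * c) u (starM lact ract R b c v w) := by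
  simp only [starM, ← hRB, hlact, map_add, LinearMap.add_apply, hmid, hract]
  abel

end OpsLemmas

section Faces

variable (lact : A →ₗ[k] M →ₗ[k] M) (ract : M →ₗ[k] A →ₗ[k] M) (R : Ω → M →ₗ[k] A)

/-- The `i`-th coface operator on `N`-cochains, `0 ≤ i ≤ N + 1`. -/
noncomputable def Face (N i : ℕ) (g : (ℕ → Ω) → (ℕ → M) → A) : (ℕ → Ω) → (ℕ → M) → A :=
  fun α u =>
    if i = 0 then
      Lop ract R (α 0) (prodSeg α 0 N) (u 0) (g (fun t => α (1 + t)) (fun t => u (1 + t)))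
    else if i ≤ N then
      g (collapseAt α (i - 1) 2 (α (i - 1) * α i))
        (collapseAt u (i - 1) 2 (starM lact ract R (α (i - 1)) (α i) (u (i - 1)) (u i)))
    else
      Rop lact R (α N) (prodSeg α 0 N) (u N) (g α u)

lemma Face_zero_apply (N : ℕ) (g : (ℕ → Ω) → (ℕ → M) → A) (α : ℕ → Ω) (u : ℕ → M) :
    Face lact ract R N 0 g α u
      = Lop ract R (α 0) (prodSeg α 0 N) (u 0)
          (g (fun t => α (1 + t)) (fun t => u (1 + t))) := by
  simp [Face]

lemma Face_mid_apply (N i : ℕ) (h1 : i ≠ 0) (h2 : i ≤ N)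
    (g : (ℕ → Ω) → (ℕ → M) → A) (α : ℕ → Ω) (u : ℕ → M) :
    Face lact ract R N i g α u
      = g (collapseAt α (i - 1) 2 (α (i - 1) * α i))
          (collapseAt u (i - 1) 2 (starM lact ract R (α (i - 1)) (α i) (u (i - 1)) (u i))) := by
  simp [Face, h1, h2]

lemma Face_top_apply (N i : ℕ) (h : N < i)
    (g : (ℕ → Ω) → (ℕ → M) → A) (α : ℕ → Ω) (u : ℕ → M) :
    Face lact ract R N i g α u = Rop lact R (α N) (prodSeg α 0 N) (u N) (g α u) := by
  have h1 : i ≠ 0 := by omega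
  have h2 : ¬ i ≤ N := by omega
  simp [Face, h1, h2]

lemma dFam_eq_sum_faces (N : ℕ) (g : (ℕ → Ω) → (ℕ → M) → A) (α : ℕ → Ω) (u : ℕ → M) :
    dFam lact ract R N g α u
      = ∑ i ∈ Finset.range (N + 2), ((-1 : ℤ) ^ i) • Face lact ract R N i g α u := by
  rw [Finset.sum_range_succ, Finset.sum_range_succ']
  have hmidsum : ∀ i ∈ Finset.range N,
      ((-1 : ℤ) ^ (i + 1)) • Face lact ract R N (i + 1) g α u
        = ((-1 : ℤ) ^ (i + 1)) • g (collapseAt α i 2 (α i * α (i + 1)))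
            (collapseAt u i 2
              (lact (R (α i) (u i)) (u (i + 1)) + ract (u i) (R (α (i + 1)) (u (i + 1))))) := by
    intro i hi
    rw [Finset.mem_range] at hi
    rw [Face_mid_apply lact ract R N (i + 1) (by omega) (by omega)]
    simp only [Nat.add_sub_cancel, starM]
  rw [Finset.sum_congr rfl hmidsum, Face_zero_apply,
    Face_top_apply lact ract R N (N + 1) (by omega)]
  simp only [Lop_apply, Rop_apply, pow_zero, one_smul, smul_sub]
  unfold dFam
  abel

lemma Face_apply_sum (N i m : ℕ) (c : ℕ → ℤ) (G : ℕ → (ℕ → Ω) → (ℕ → M) → A)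
    (α : ℕ → Ω) (u : ℕ → M) :
    Face lact ract R N i (fun a b => ∑ j ∈ Finset.range m, c j • G j a b) α u
      = ∑ j ∈ Finset.range m, c j • Face lact ract R N i (G j) α u := by
  unfold Face
  split_ifs with h1 h2
  · rw [map_sum]
    exact Finset.sum_congr rfl (fun j _ => map_zsmul _ _ _)
  · rfl
  · rw [map_sum]
    exact Finset.sum_congr rfl (fun j _ => map_zsmul _ _ _)

end Faces

lemma sum_cancel {β : Type*} [AddCommGroup β] (N : ℕ) (T : ℕ → ℕ → β)
    (hT : ∀ i j, j < i → i ≤ N + 2 → j ≤ N + 1 → T i j = T j (i - 1)) :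
    ∑ p ∈ Finset.range (N + 3) ×ˢ Finset.range (N + 2),
      ((-1 : ℤ) ^ (p.1 + p.2)) • T p.1 p.2 = 0 := by
  apply Finset.sum_involution
    (g := fun p _ => if p.2 < p.1 then (p.2, p.1 - 1) else (p.2 + 1, p.1))
  · intro p hp
    simp only [Finset.mem_product, Finset.mem_range] at hp
    by_cases h : p.2 < p.1
    · rw [if_pos h]
      have hT' := hT p.1 p.2 h (by omega) (by omega)
      rw [hT']
      have hsgn : ((-1 : ℤ) ^ (p.1 + p.2)) = -((-1 : ℤ) ^ (p.2 + (p.1 - 1))) := by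
        rw [show p.1 + p.2 = (p.2 + (p.1 - 1)) + 1 by omega, pow_succ]
        ring
      rw [hsgn, neg_smul]
      abel
    · rw [if_neg h]
      have hT' := hT (p.2 + 1) p.1 (by omega) (by omega) (by omega)
      simp only [Nat.add_sub_cancel] at hT'
      rw [hT']
      have hsgn : ((-1 : ℤ) ^ (p.2 + 1 + p.1)) = -((-1 : ℤ) ^ (p.1 + p.2)) := by
        rw [show p.2 + 1 + p.1 = (p.1 + p.2) + 1 by omega, pow_succ]
        ring
      rw [hsgn, neg_smul]
      abel
  · intro p hp hne
    by_cases hc : p.2 < p.1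
    · rw [if_pos hc]
      intro hcon
      have h1 : p.2 = p.1 := congrArg Prod.fst hcon
      omega
    · rw [if_neg hc]
      intro hcon
      have h1 : p.2 + 1 = p.1 := congrArg Prod.fst hcon
      omega
  · intro p hp
    obtain ⟨a, b⟩ := p
    simp only [Finset.mem_product, Finset.mem_range] at hp
    split_ifs <;> simp_all [Prod.ext_iff] <;> omega
  · intro p hp
    obtain ⟨a, b⟩ := p
    simp only [Finset.mem_product, Finset.mem_range] at hp
    split_ifs <;> simp_all [Finset.mem_product] <;> omega

end DFamSq


namespace DFamSq

section Coface

variable {lact : A →ₗ[k] M →ₗ[k] M} {ract : M →ₗ[k] A →ₗ[k] M} {R : Ω → M →ₗ[k] A}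
variable (hlact : ∀ (a b : A) (u : M), lact (a * b) u = lact a (lact b u))
variable (hmid : ∀ (a : A) (u : M) (b : A), ract (lact a u) b = lact a (ract u b))
variable (hract : ∀ (u : M) (a b : A), ract (ract u a) b = ract u (a * b))
variable (hRB : ∀ (α β : Ω) (u v : M),
      R α u * R β v = R (α * β) (lact (R α u) v + ract u (R β v)))

include hlact hmid hract hRB in
lemma coface (n : ℕ) (f : (ℕ → Ω) → (ℕ → M) → A)
    (hf1 : ∀ (a a' : ℕ → Ω) (v v' : ℕ → M),
      (∀ t, t < n → a t = a' t) → (∀ t, t < n → v t = v' t) → f a v = f a' v')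
    (α : ℕ → Ω) (u : ℕ → M) (i j : ℕ) (hji : j < i) (hi : i ≤ n + 2) (hj : j ≤ n + 1) :
    Face lact ract R (n + 1) i (Face lact ract R n j f) α u
      = Face lact ract R (n + 1) j (Face lact ract R n (i - 1) f) α u := by
  have hsub2 : ∀ m : ℕ, m + 2 - 1 = m + 1 := fun m => rfl
  rcases Nat.eq_zero_or_pos j with rfl | hjpos
  · -- j = 0
    by_cases hi1 : i = 1
    · -- CASE A1 : i = 1, j = 0
      subst hi1
      rw [Face_mid_apply lact ract R (n + 1) 1 (by omega) (by omega)]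
      simp only [Face_zero_apply, show (1 : ℕ) - 1 = 0 from rfl]
      rw [cA_self, cA_self, prodSeg_collapse 0 α n (by omega), shift_collapse_zero,
        shift_collapse_zero, prodSeg_shift α 1 n 0]
      exact (LL hmid hract hRB (α 0) (α 1) (prodSeg α 1 n) (u 0) (u 1) _).symm
    · by_cases hit : i = n + 2
      · -- CASE A3 : i = n + 2, j = 0
        subst hit
        rw [Face_top_apply lact ract R (n + 1) (n + 2) (by omega)]
        simp only [Face_zero_apply, hsub2]
        rw [Face_top_apply lact ract R n (n + 1) (by omega)]
        rw [prodSeg_shift α 1 n 0]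
        rw [show (1 : ℕ) + n = n + 1 from Nat.add_comm 1 n]
        have hω : α 0 * prodSeg α 1 n = prodSeg α 0 n * α (n + 1) := by
          have h := prodSeg_succ_right α n 0
          rw [show 0 + n + 1 = n + 1 by omega] at h
          exact h
        exact (LR hlact hmid hract hRB (α 0) (α (n + 1)) (prodSeg α 1 n) (prodSeg α 0 n)
          hω (u 0) (u (n + 1)) _).symm
      · -- CASE A2 : 2 ≤ i ≤ n + 1, j = 0
        obtain ⟨q, rfl⟩ : ∃ q, i = q + 2 := ⟨i - 2, by omega⟩
        rw [Face_mid_apply lact ract R (n + 1) (q + 2) (by omega) (by omega)]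
        simp only [hsub2, Nat.add_sub_cancel, Face_zero_apply]
        rw [Face_mid_apply lact ract R n (q + 1) (by omega) (by omega)]
        simp only [Nat.add_sub_cancel]
        rw [cA_lt α 2 _ (show 0 < q + 1 by omega), cA_lt u 2 _ (show 0 < q + 1 by omega),
          prodSeg_collapse (q + 1) α n (by omega), shift_collapse α q _, shift_collapse u q _,
          show (1 : ℕ) + q = q + 1 from Nat.add_comm 1 q,
          show (1 : ℕ) + (q + 1) = q + 2 by omega]
  · -- j = p + 1
    obtain ⟨p, rfl⟩ : ∃ p, j = p + 1 := ⟨j - 1, by omega⟩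
    by_cases hjt : p + 1 = n + 1
    · -- CASE C : j = n + 1, i = n + 2
      obtain rfl : n = p := by omega
      obtain rfl : i = n + 2 := by omega
      rw [Face_top_apply lact ract R (n + 1) (n + 2) (by omega),
        Face_top_apply lact ract R n (n + 1) (by omega)]
      simp only [hsub2, Nat.add_sub_cancel]
      rw [Face_mid_apply lact ract R (n + 1) (n + 1) (by omega) (by omega)]
      simp only [Nat.add_sub_cancel]
      rw [Face_top_apply lact ract R n (n + 1) (by omega)]
      rw [cA_self, cA_self, prodSeg_collapse n α n (by omega)]
      have hfe : f (collapseAt α n 2 (α n * α (n + 1)))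
          (collapseAt u n 2 (starM lact ract R (α n) (α (n + 1)) (u n) (u (n + 1)))) = f α u :=
        hf1 _ _ _ _ (fun t ht => cA_lt α 2 _ ht) (fun t ht => cA_lt u 2 _ ht)
      rw [hfe]
      have hps : prodSeg α 0 (n + 1) = prodSeg α 0 n * α (n + 1) := by
        rw [prodSeg_succ_right α n 0, show 0 + n + 1 = n + 1 by omega]
      rw [hps]
      exact RR hlact hmid hRB (α n) (α (n + 1)) (prodSeg α 0 n) (u n) (u (n + 1)) (f α u)
    · -- 1 ≤ j ≤ n
      by_cases hit : i = n + 2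
      · -- CASE B3 : i = n + 2, 1 ≤ j ≤ n
        subst hit
        rw [Face_top_apply lact ract R (n + 1) (n + 2) (by omega)]
        rw [Face_mid_apply lact ract R n (p + 1) (by omega) (by omega)]
        simp only [hsub2, Nat.add_sub_cancel]
        rw [Face_mid_apply lact ract R (n + 1) (p + 1) (by omega) (by omega)]
        simp only [Nat.add_sub_cancel]
        rw [Face_top_apply lact ract R n (n + 1) (by omega)]
        rw [cA_gt α 2 _ (show p < n by omega), cA_gt u 2 _ (show p < n by omega)]
        simp only [hsub2]
        rw [prodSeg_collapse p α n (by omega)]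
      · -- i ≤ n + 1
        by_cases hadj : i = p + 2
        · -- CASE B1 : i = j + 1 (adjacent)
          subst hadj
          rw [Face_mid_apply lact ract R (n + 1) (p + 2) (by omega) (by omega)]
          simp only [hsub2, Nat.add_sub_cancel]
          rw [Face_mid_apply lact ract R n (p + 1) (by omega) (by omega),
            Face_mid_apply lact ract R (n + 1) (p + 1) (by omega) (by omega)]
          simp only [Nat.add_sub_cancel]
          rw [Face_mid_apply lact ract R n (p + 1) (by omega) (by omega)]
          simp only [Nat.add_sub_cancel]
          rw [cA_lt α 2 _ (show p < p + 1 by omega), cA_lt u 2 _ (show p < p + 1 by omega),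
            cA_self, cA_self, cA_self, cA_self,
            cA_gt α 2 _ (show p < p + 1 by omega), cA_gt u 2 _ (show p < p + 1 by omega)]
          simp only [hsub2]
          rw [← mul_assoc, ← star_assoc hlact hmid hract hRB,
            collapse_collapse_adj α p (α p * α (p + 1)),
            collapse_collapse_adj u p (starM lact ract R (α p) (α (p + 1)) (u p) (u (p + 1)))]
        · -- CASE B2 : j + 2 ≤ i ≤ n + 1
          obtain ⟨q, rfl⟩ : ∃ q, i = q + 2 := ⟨i - 2, by omega⟩
          have hpq : p < q := by omega
          rw [Face_mid_apply lact ract R (n + 1) (q + 2) (by omega) (by omega)]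
          simp only [hsub2, Nat.add_sub_cancel]
          rw [Face_mid_apply lact ract R n (p + 1) (by omega) (by omega),
            Face_mid_apply lact ract R (n + 1) (p + 1) (by omega) (by omega)]
          simp only [Nat.add_sub_cancel]
          rw [Face_mid_apply lact ract R n (q + 1) (by omega) (by omega)]
          simp only [Nat.add_sub_cancel]
          rw [cA_lt α 2 _ (show p < q + 1 by omega), cA_lt α 2 _ (show p + 1 < q + 1 by omega),
            cA_lt u 2 _ (show p < q + 1 by omega), cA_lt u 2 _ (show p + 1 < q + 1 by omega),
            cA_gt α 2 _ (show p < q by omega), cA_gt α 2 _ (show p < q + 1 by omega),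
            cA_gt u 2 _ (show p < q by omega), cA_gt u 2 _ (show p < q + 1 by omega)]
          simp only [hsub2]
          rw [collapse_collapse α hpq, collapse_collapse u hpq]

end Coface

end DFamSq


/- STATEMENT 11: for a relative Rota-Baxter family algebra `(A, M, {R_α})`,
the map `d_R : Hom_Ω(M^{⊗n}, A) → Hom_Ω(M^{⊗(n+1)}, A)` squares to zero. -/

theorem dFam_squared_zero
    (lact : A →ₗ[k] M →ₗ[k] M) (ract : M →ₗ[k] A →ₗ[k] M)
    -- bimodule axioms
    (hlact : ∀ (a b : A) (u : M), lact (a * b) u = lact a (lact b u))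
    (hmid : ∀ (a : A) (u : M) (b : A), ract (lact a u) b = lact a (ract u b))
    (hract : ∀ (u : M) (a b : A), ract (ract u a) b = ract u (a * b))
    -- the relative Rota-Baxter family identity
    (R : Ω → M →ₗ[k] A)
    (hRB : ∀ (α β : Ω) (u v : M),
      R α u * R β v = R (α * β) (lact (R α u) v + ract u (R β v)))
    (n : ℕ) (hn : 1 ≤ n)
    (f : (ℕ → Ω) → (ℕ → M) → A) (hf : IsFamMulti k n f) :
    ∀ (α : ℕ → Ω) (u : ℕ → M),
      dFam lact ract R (n + 1) (dFam lact ract R n f) α u = 0 := by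
  intro α u
  have hd : dFam lact ract R n f
      = fun a b => ∑ j ∈ Finset.range (n + 2), ((-1 : ℤ) ^ j) • DFamSq.Face lact ract R n j f a b := by
    funext a b
    exact DFamSq.dFam_eq_sum_faces lact ract R n f a b
  rw [DFamSq.dFam_eq_sum_faces lact ract R (n + 1) (dFam lact ract R n f) α u]
  have h2 : ∀ i ∈ Finset.range (n + 3),
      ((-1 : ℤ) ^ i) • DFamSq.Face lact ract R (n + 1) i (dFam lact ract R n f) α u
        = ∑ j ∈ Finset.range (n + 2), ((-1 : ℤ) ^ (i + j)) •
            DFamSq.Face lact ract R (n + 1) i (DFamSq.Face lact ract R n j f) α u := by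
    intro i _
    rw [hd, DFamSq.Face_apply_sum, Finset.smul_sum]
    exact Finset.sum_congr rfl (fun j _ => by rw [smul_smul, ← pow_add])
  rw [show n + 1 + 2 = n + 3 by omega, Finset.sum_congr rfl h2, ← Finset.sum_product']
  exact DFamSq.sum_cancel n
    (fun i j => DFamSq.Face lact ract R (n + 1) i (DFamSq.Face lact ract R n j f) α u)
    (fun i j h1 h2 h3 => DFamSq.coface hlact hmid hract hRB n f hf.1 α u i j h1 h2 h3)
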